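/- φ_{p,q} ∘ g_{p,q} = δ_p ∘ φ_{p,q}, i.e. for every u ∈ ℤ_p, φ_{p,q}(g_{p,q}(u)) = δ_p(φ_{p,q}(u)). -/

import Mathlib

open scoped Classical

/-- `ε₀(u)`: the unique integer in `{0, …, p−1}` congruent to `u` modulo `p`. -/
noncomputable def eps0 {p : ℕ} [Fact p.Prime] (u : ℤ_[p]) : ℕ := (PadicInt.toZMod u).val

/-- `φ_{p,q}(u) = Σ ε₀(-q·g^n(u)) p^n`, for a given iteration map `g`. -/
noncomputable def phi (p q : ℕ) [Fact p.Prime] (g : ℤ_[p] → ℤ_[p]) (u : ℤ_[p]) : ℤ_[p] :=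
  ∑' n : ℕ, (eps0 (-((q : ℤ_[p]) * g^[n] u)) : ℤ_[p]) * (p : ℤ_[p]) ^ n

/-!
Since `g^[n + 1] u = g^[n] (g u)`, the digit sequence of `φ (g u)` is that of `φ u` with its
first digit `ε₀(-q u)` dropped, so `φ u = ε₀(-q u) + p φ (g u)`. As `ε₀(-q u) < p`, this forces
`ε₀(φ u) = ε₀(-q u)`, and dividing by `p` gives `δ (φ u) = φ (g u)`.
-/

namespace PadicInt

variable {p : ℕ} [Fact p.Prime]

lemma summable_mul_pow (c : ℕ → ℤ_[p]) : Summable fun n => c n * (p : ℤ_[p]) ^ n := by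
  have hp : 1 < (p : ℝ) := by exact_mod_cast (Fact.out : p.Prime).one_lt
  refine Summable.of_norm_bounded
    (summable_geometric_of_lt_one (by positivity) (inv_lt_one_of_one_lt₀ hp)) fun n => ?_
  calc ‖c n * (p : ℤ_[p]) ^ n‖ ≤ ‖(p : ℤ_[p]) ^ n‖ := by
        rw [norm_mul]
        exact mul_le_of_le_one_left (norm_nonneg _) (c n).norm_le_one
    _ = (p : ℝ)⁻¹ ^ n := by
        rw [norm_p_pow, inv_pow, ← zpow_natCast, ← zpow_neg]

lemma tsum_mul_pow_eq_add_mul_tsum_succ (c : ℕ → ℤ_[p]) :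
    ∑' n, c n * (p : ℤ_[p]) ^ n = c 0 + p * ∑' n, c (n + 1) * (p : ℤ_[p]) ^ n := by
  rw [(summable_mul_pow c).tsum_eq_zero_add, ← (summable_mul_pow _).tsum_mul_left]
  simp only [pow_zero, mul_one, pow_succ]
  congr 1
  exact tsum_congr fun n => by ring

end PadicInt

section Digit

variable {p : ℕ} [Fact p.Prime]

lemma eps0_lt (u : ℤ_[p]) : eps0 u < p :=
  ZMod.val_lt _

lemma eps0_natCast_add_p_mul {k : ℕ} (hk : k < p) (w : ℤ_[p]) :
    eps0 ((k : ℤ_[p]) + (p : ℤ_[p]) * w) = k := by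
  rw [eps0, map_add, map_mul, map_natCast, map_natCast, ZMod.natCast_self, zero_mul, add_zero,
    ZMod.val_natCast_of_lt hk]

end Digit

lemma phi_eq_eps0_add_p_mul_phi_apply (p q : ℕ) [Fact p.Prime] (g : ℤ_[p] → ℤ_[p]) (u : ℤ_[p]) :
    phi p q g u = (eps0 (-((q : ℤ_[p]) * u)) : ℤ_[p]) + p * phi p q g (g u) :=
  PadicInt.tsum_mul_pow_eq_add_mul_tsum_succ _

theorem stmt5_general (p q : ℕ) [Fact p.Prime]
    (g : ℤ_[p] → ℤ_[p])
    (δ : ℤ_[p] → ℤ_[p])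
    (hδ : ∀ v : ℤ_[p], (p : ℤ_[p]) * δ v = v - (eps0 v : ℤ_[p]))
    (u : ℤ_[p]) :
    phi p q g (g u) = δ (phi p q g u) := by
  have hp : (p : ℤ_[p]) ≠ 0 := Nat.cast_ne_zero.mpr (Fact.out : p.Prime).ne_zero
  apply mul_left_cancel₀ hp
  rw [hδ, phi_eq_eps0_add_p_mul_phi_apply p q g u, eps0_natCast_add_p_mul (eps0_lt _)]
  ring

/-- `φ_{p,q} ∘ g_{p,q} = δ_p ∘ φ_{p,q}`, where `δ_p(v) = (v - ε₀(v))/p`. -/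
theorem stmt5 (p q : ℕ) [Fact p.Prime] (hq : 0 < q) (hpq : Nat.Coprime p q)
    (g : ℤ_[p] → ℤ_[p])
    (hg : ∀ u : ℤ_[p], (p : ℤ_[p]) * g u =
      if (p : ℤ_[p]) ∣ u then u
      else (q : ℤ_[p]) * u + (eps0 (-((q : ℤ_[p]) * u)) : ℤ_[p]))
    (δ : ℤ_[p] → ℤ_[p])
    (hδ : ∀ v : ℤ_[p], (p : ℤ_[p]) * δ v = v - (eps0 v : ℤ_[p]))
    (u : ℤ_[p]) :
    phi p q g (g u) = δ (phi p q g u) :=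
  stmt5_general p q g δ hδ u
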